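/- arXiv:1501.04725 — 2 statements merged into one kernel-verified Lean document; each statement's English description precedes it below -/
import Mathlib

section
/- Theorem 2 (probabilistic completeness of DTInv): There exists a constant C > 0 such that the following holds for all d ≥ 1, K ≥ 2, 0 < ε ≤ 1/2, and 0 < δ ≤ 1/2. Let μ be a (Borel) probability measure on Fin d → ℝ, let c : (Fin d → ℝ) → Bool be a measurable target labeling, and suppose the sample size n satisfies n ≥ C·(1/ε)·K·d·(log K)·log(1/(ε·δ)). Then the outer measure, with respect to the product measure μⁿ, of the set of samples x : Fin n → (Fin d → ℝ) for which some decision tree T over ℝ^d with at most K inner nodes satisfies eval(T, x i) = c(x i) for all i yet has true error μ({z | eval(T, z) ≠ c(z)}) > ε, is at most δ. In particular, any decision tree with at most K nodes that is consistent with a sample of this size has true error at most ε with probability at least 1 − δ. -/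
open MeasureTheory

/-- A decision tree over `ℝ^d`: a leaf labeled by a Boolean, or an inner node with a
feature index, a real threshold, and left/right subtrees. -/
inductive DTree (d : ℕ) : Type
  | leaf (b : Bool) : DTree d
  | node (i : Fin d) (t : ℝ) (L R : DTree d) : DTree d

/-- Evaluation of a decision tree on a point `z : Fin d → ℝ`. -/
noncomputable def DTree.eval {d : ℕ} : DTree d → (Fin d → ℝ) → Bool
  | .leaf b, _ => b
  | .node i t L R, z => if z i ≤ t then L.eval z else R.eval z

/-- The number of inner nodes of a decision tree. -/
def DTree.innerNodes {d : ℕ} : DTree d → ℕ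
  | .leaf _ => 0
  | .node _ _ L R => 1 + L.innerNodes + R.innerNodes

/-!
Fix a grid of `M ≈ 2(d+K)/ε` points on each coordinate axis, namely the quantiles of the
marginal of `μ` at levels `(j+1)/(M+1)`, and snap every threshold of a tree down to the grid.
The snapped tree makes the same decisions as the original one outside a set of mass at most
`(d+K)/(M+1) ≤ ε/2`: one quantile gap per inner node and the lowest gap on each axis. So if a
tree with error `> ε` is consistent with the sample, then every sample point lies in a set of
mass `≤ 1 - ε/2` determined by the snapped tree alone. Snapped trees with at most `K` inner
nodes are determined by their preorder codes, so there are at most `(dM+3)^(2K+1)` of them, and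
the union bound gives `(dM+3)^(2K+1) (1 - ε/2)^n ≤ δ` for the stated sample size.
-/

open ProbabilityTheory Set Filter
open scoped ENNReal Topology

lemma measure_le_of_isLowerSet {α : Type*} [ConditionallyCompleteLinearOrder α]
    [TopologicalSpace α] [OrderTopology α] [SecondCountableTopology α] [MeasurableSpace α]
    {ν : Measure α} {S : Set α} (hS : IsLowerSet S) {r : ℝ≥0∞}
    (h : ∀ x ∈ S, ν (Iic x) ≤ r) : ν S ≤ r := by
  rcases S.eq_empty_or_nonempty with rfl | hne
  · simp
  have : Nonempty S := hne.to_subtype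
  -- gives the subtype `S` the order topology, hence a countably generated `atTop`
  have : S.OrdConnected := hS.ordConnected
  have hunion : (⋃ x : S, Iic (x : α)) = S :=
    Subset.antisymm (iUnion_subset fun x _ hy => hS hy x.2)
      fun y hy => mem_iUnion.2 ⟨⟨y, hy⟩, mem_Iic.2 le_rfl⟩
  have hlim := tendsto_measure_iUnion_atTop (μ := ν) (s := fun x : S => Iic (x : α))
    fun _ _ hab => Iic_subset_Iic.2 hab
  rw [hunion] at hlim
  exact le_of_tendsto' hlim fun x => h x x.2

section Quantile

variable (ν : Measure ℝ)

lemma isLowerSet_setOf_cdf_le (c : ℝ) : IsLowerSet {x | cdf ν x ≤ c} :=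
  fun _ _ hba ha => ((cdf ν).mono hba).trans ha

lemma measure_setOf_cdf_le_le [IsProbabilityMeasure ν] (c : ℝ) :
    ν {x | cdf ν x ≤ c} ≤ ENNReal.ofReal c :=
  measure_le_of_isLowerSet (isLowerSet_setOf_cdf_le ν c) fun x hx => by
    rw [← ofReal_cdf]
    exact ENNReal.ofReal_le_ofReal hx

lemma measure_Ioi_inter_setOf_cdf_le_le [IsProbabilityMeasure ν] (t c : ℝ) :
    ν (Ioi t ∩ {x | cdf ν x ≤ c}) ≤ ENNReal.ofReal (c - cdf ν t) := by
  rw [inter_comm, ← Measure.restrict_apply' measurableSet_Ioi]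
  refine measure_le_of_isLowerSet (isLowerSet_setOf_cdf_le ν c) fun x hx => ?_
  have hIoc := (cdf ν).measure_Ioc t x
  rw [measure_cdf] at hIoc
  rw [Measure.restrict_apply' measurableSet_Ioi, Iic_inter_Ioi, hIoc]
  exact ENNReal.ofReal_le_ofReal (by linarith [show cdf ν x ≤ c from hx])

noncomputable def quantile (p : ℝ) : ℝ :=
  sInf {t | p ≤ cdf ν t}

lemma bddBelow_setOf_le_cdf {p : ℝ} (hp : 0 < p) : BddBelow {t | p ≤ cdf ν t} := by
  obtain ⟨t₀, ht₀⟩ := eventually_atBot.1 ((tendsto_cdf_atBot ν).eventually (eventually_lt_nhds hp))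
  exact ⟨t₀, fun s hs => le_of_not_gt fun hst => (ht₀ s hst.le).not_ge hs⟩

lemma cdf_lt_of_lt_quantile {p t : ℝ} (hp : 0 < p) (ht : t < quantile ν p) : cdf ν t < p :=
  lt_of_not_ge fun hpt => (csInf_le (bddBelow_setOf_le_cdf ν hp) hpt).not_gt ht

lemma le_cdf_quantile {p : ℝ} (hp₀ : 0 < p) (hp₁ : p < 1) : p ≤ cdf ν (quantile ν p) := by
  have hne : {t | p ≤ cdf ν t}.Nonempty :=
    ((tendsto_cdf_atTop ν).eventually (eventually_ge_nhds hp₁)).exists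
  have hright : Tendsto (cdf ν) (𝓝[>] (quantile ν p)) (𝓝 (cdf ν (quantile ν p))) :=
    ((cdf ν).right_continuous _).mono Ioi_subset_Ici_self
  refine ge_of_tendsto hright (eventually_nhdsWithin_of_forall fun t ht => ?_)
  obtain ⟨s, hs, hst⟩ := (csInf_lt_iff (bddBelow_setOf_le_cdf ν hp₀) hne).1 ht
  exact hs.trans ((cdf ν).mono hst.le)

end Quantile

section Grid

variable {M : ℕ}

def belowGrid (g : Fin M → ℝ) : Set ℝ := {x | ∀ j, x < g j}

def gridGap (g : Fin M → ℝ) (j : Fin M) : Set ℝ := {x | g j < x ∧ ∀ j', j < j' → x < g j'}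

noncomputable def gridFloor (g : Fin M → ℝ) (t : ℝ) : WithBot (Fin M) :=
  (Finset.univ.filter fun j => g j ≤ t).max

lemma gridFloor_eq_bot_iff {g : Fin M → ℝ} {t : ℝ} : gridFloor g t = ⊥ ↔ ∀ j, t < g j := by
  simp [gridFloor, Finset.max_eq_bot, Finset.filter_eq_empty_iff]

lemma gridFloor_eq_coe {g : Fin M → ℝ} {t : ℝ} {j : Fin M} (h : gridFloor g t = j) :
    g j ≤ t ∧ ∀ j', j < j' → t < g j' := by
  refine ⟨(Finset.mem_filter.1 (Finset.mem_of_max h)).2, fun j' hj' => lt_of_not_ge fun hle => ?_⟩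
  exact (Finset.le_max_of_eq (s := Finset.univ.filter fun j => g j ≤ t)
    (Finset.mem_filter.2 ⟨Finset.mem_univ _, hle⟩) h).not_gt hj'

noncomputable def quantileGrid (ν : Measure ℝ) (M : ℕ) (j : Fin M) : ℝ :=
  quantile ν ((j + 1) / (M + 1))

variable (ν : Measure ℝ) [IsProbabilityMeasure ν]

lemma measure_belowGrid_quantileGrid_le (hM : 0 < M) :
    ν (belowGrid (quantileGrid ν M)) ≤ ENNReal.ofReal (1 / (M + 1)) := by
  refine (measure_mono fun x hx => ?_).trans (measure_setOf_cdf_le_le ν _)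
  have := cdf_lt_of_lt_quantile ν (by positivity) (hx ⟨0, hM⟩)
  simp only [Nat.cast_zero, zero_add] at this
  exact this.le

lemma measure_gridGap_quantileGrid_le (j : Fin M) :
    ν (gridGap (quantileGrid ν M) j) ≤ ENNReal.ofReal (1 / (M + 1)) := by
  have hM : (0 : ℝ) < M + 1 := by positivity
  have hsub : gridGap (quantileGrid ν M) j ⊆
      Ioi (quantileGrid ν M j) ∩ {x | cdf ν x ≤ (j + 2) / (M + 1)} := by
    rintro x ⟨hjx, hx⟩
    refine ⟨hjx, ?_⟩
    by_cases hj : (j : ℕ) + 1 < M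
    · have := cdf_lt_of_lt_quantile ν (by positivity) (hx ⟨j + 1, hj⟩ (Fin.lt_def.2 (by simp)))
      push_cast at this
      rw [add_assoc, one_add_one_eq_two] at this
      exact this.le
    · refine (cdf_le_one ν x).trans ((one_le_div hM).2 ?_)
      exact_mod_cast (by omega : M + 1 ≤ (j : ℕ) + 2)
  have hlevel : ((j : ℝ) + 1) / (M + 1) ≤ cdf ν (quantileGrid ν M j) := by
    refine le_cdf_quantile ν (by positivity) ((div_lt_one hM).2 ?_)
    exact_mod_cast (by omega : (j : ℕ) + 1 < M + 1)
  refine (measure_mono hsub).trans ((measure_Ioi_inter_setOf_cdf_le_le ν _ _).trans ?_)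
  refine ENNReal.ofReal_le_ofReal ?_
  have : ((j : ℝ) + 2) / (M + 1) = ((j : ℝ) + 1) / (M + 1) + 1 / (M + 1) := by ring
  linarith

end Grid

/-- A decision tree whose thresholds are grid points, given by their indices `j : Fin M`. -/
inductive ITree (d M : ℕ) : Type
  | leaf (b : Bool) : ITree d M
  | node (i : Fin d) (j : Fin M) (L R : ITree d M) : ITree d M

section Trees

variable {d M : ℕ}

namespace ITree

noncomputable def eval (g : Fin d → Fin M → ℝ) : ITree d M → (Fin d → ℝ) → Bool
  | leaf b, _ => b
  | node i j L R, z => if z i ≤ g i j then L.eval g z else R.eval g z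

def size : ITree d M → ℕ
  | leaf _ => 0
  | node _ _ L R => 1 + L.size + R.size

def gapSet (g : Fin d → Fin M → ℝ) : ITree d M → Set (Fin d → ℝ)
  | leaf _ => ∅
  | node i j L R => {z | z i ∈ gridGap (g i) j} ∪ L.gapSet g ∪ R.gapSet g

def preorder : ITree d M → List (Bool ⊕ Fin d × Fin M)
  | leaf b => [.inl b]
  | node i j L R => .inr (i, j) :: (L.preorder ++ R.preorder)

lemma preorder_append_inj {T T' : ITree d M} {l l' : List (Bool ⊕ Fin d × Fin M)}
    (h : T.preorder ++ l = T'.preorder ++ l') : T = T' ∧ l = l' := by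
  induction T generalizing T' l l' with
  | leaf b => cases T' <;> simp_all [preorder]
  | node i j L R ihL ihR =>
    cases T' with
    | leaf b => simp [preorder] at h
    | node i' j' L' R' =>
      simp only [preorder, List.cons_append, List.cons.injEq, Sum.inr.injEq, Prod.mk.injEq,
        List.append_assoc] at h
      obtain ⟨⟨rfl, rfl⟩, hLR⟩ := h
      obtain ⟨rfl, hR⟩ := ihL hLR
      obtain ⟨rfl, rfl⟩ := ihR hR
      exact ⟨rfl, rfl⟩

lemma preorder_injective : Function.Injective (preorder : ITree d M → _) := fun _ _ h =>
  (preorder_append_inj (l := []) (l' := []) (by simpa using h)).1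

lemma length_preorder (T : ITree d M) : T.preorder.length = 2 * T.size + 1 := by
  induction T with
  | leaf b => rfl
  | node i j L R ihL ihR =>
    simp only [preorder, size, List.length_cons, List.length_append, ihL, ihR]
    ring

lemma injective_getElem?_preorder (K : ℕ) :
    Function.Injective fun T : {T : ITree d M // T.size ≤ K} =>
      fun k : Fin (2 * K + 1) => T.1.preorder[(k : ℕ)]? := by
  rintro ⟨T, hT⟩ ⟨T', hT'⟩ h
  refine Subtype.ext (preorder_injective (List.ext_getElem? fun k => ?_))
  change T.preorder[k]? = T'.preorder[k]?
  by_cases hk : k < 2 * K + 1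
  · exact congrFun h ⟨k, hk⟩
  · rw [List.getElem?_eq_none (by rw [length_preorder]; omega),
      List.getElem?_eq_none (by rw [length_preorder]; omega)]

instance (K : ℕ) : Finite {T : ITree d M // T.size ≤ K} :=
  Finite.of_injective _ (injective_getElem?_preorder K)

lemma natCard_size_le_le (K : ℕ) :
    Nat.card {T : ITree d M // T.size ≤ K} ≤ (d * M + 3) ^ (2 * K + 1) := by
  refine (Nat.card_le_card_of_injective _ (injective_getElem?_preorder K)).trans_eq ?_
  simp only [Nat.card_eq_fintype_card, Fintype.card_pi, Fintype.card_option, Fintype.card_sum,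
    Fintype.card_bool, Fintype.card_prod, Fintype.card_fin, Finset.prod_const, Finset.card_univ]
  ring

end ITree

def lowSet (g : Fin d → Fin M → ℝ) : Set (Fin d → ℝ) := ⋃ i, (fun z => z i) ⁻¹' belowGrid (g i)

def ITree.badSet (g : Fin d → Fin M → ℝ) (T : ITree d M) : Set (Fin d → ℝ) :=
  lowSet g ∪ T.gapSet g

def ITree.compatibleSet (g : Fin d → Fin M → ℝ) (c : (Fin d → ℝ) → Bool) (T : ITree d M) :
    Set (Fin d → ℝ) :=
  T.badSet g ∪ {z | T.eval g z = c z}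

namespace DTree

noncomputable def snap (g : Fin d → Fin M → ℝ) : DTree d → ITree d M
  | leaf b => .leaf b
  | node i t L R =>
    match gridFloor (g i) t with
    | ⊥ => snap g R
    | (j : Fin M) => .node i j (snap g L) (snap g R)

lemma size_snap_le (g : Fin d → Fin M → ℝ) (T : DTree d) : (T.snap g).size ≤ T.innerNodes := by
  induction T with
  | leaf b => simp [snap, ITree.size]
  | node i t L R ihL ihR =>
    cases h : gridFloor (g i) t <;> simp only [snap, h, innerNodes, ITree.size] <;> omega

lemma eval_snap_eq {g : Fin d → Fin M → ℝ} (T : DTree d) {z : Fin d → ℝ}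
    (hz : z ∉ (T.snap g).badSet g) : (T.snap g).eval g z = T.eval z := by
  simp only [ITree.badSet, mem_union, not_or] at hz
  obtain ⟨hlow, hgap⟩ := hz
  induction T with
  | leaf b => rfl
  | node i t L R ihL ihR =>
    cases hj : gridFloor (g i) t with
    | bot =>
      simp only [snap, hj] at hgap ⊢
      have hzt : ¬ z i ≤ t := fun hzt =>
        hlow (mem_iUnion.2 ⟨i, fun j => hzt.trans_lt (gridFloor_eq_bot_iff.1 hj j)⟩)
      simp only [eval, if_neg hzt]
      exact ihR hgap
    | coe j =>
      simp only [snap, hj, ITree.gapSet, mem_union, not_or] at hgap ⊢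
      obtain ⟨⟨hgapj, hgapL⟩, hgapR⟩ := hgap
      obtain ⟨hjt, habove⟩ := gridFloor_eq_coe hj
      by_cases hzj : z i ≤ g i j
      · simp only [eval, ITree.eval, if_pos hzj, if_pos (hzj.trans hjt)]
        exact ihL hgapL
      · have hzt : ¬ z i ≤ t := fun hzt =>
          hgapj ⟨lt_of_not_ge hzj, fun j' hj' => hzt.trans_lt (habove j' hj')⟩
        simp only [eval, ITree.eval, if_neg hzj, if_neg hzt]
        exact ihR hgapR

lemma measurable_eval (T : DTree d) : Measurable T.eval := by
  induction T with
  | leaf b => exact measurable_const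
  | node i t L R ihL ihR =>
    exact Measurable.ite (measurableSet_le (measurable_pi_apply i) measurable_const) ihL ihR

variable {g : Fin d → Fin M → ℝ} {c : (Fin d → ℝ) → Bool} {T : DTree d}

lemma mem_compatibleSet_snap {z : Fin d → ℝ} (h : T.eval z = c z) :
    z ∈ (T.snap g).compatibleSet g c := by
  by_cases hz : z ∈ (T.snap g).badSet g
  · exact Or.inl hz
  · exact Or.inr ((T.eval_snap_eq hz).trans h)

lemma measure_compatibleSet_snap_le (μ : Measure (Fin d → ℝ)) [IsProbabilityMeasure μ]
    (hc : Measurable c) {ε : ℝ} (hε : 0 ≤ ε) (hε₁ : ε ≤ 1)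
    (hbad : μ ((T.snap g).badSet g) ≤ ENNReal.ofReal (ε / 2))
    (herr : ENNReal.ofReal ε < μ {z | T.eval z ≠ c z}) :
    μ ((T.snap g).compatibleSet g c) ≤ ENNReal.ofReal (1 - ε / 2) := by
  have hsub : (T.snap g).compatibleSet g c ⊆ (T.snap g).badSet g ∪ {z | T.eval z ≠ c z}ᶜ := by
    rintro z (hz | hz)
    · exact Or.inl hz
    by_cases hzbad : z ∈ (T.snap g).badSet g
    · exact Or.inl hzbad
    · exact Or.inr fun hne => hne ((T.eval_snap_eq hzbad).symm.trans hz)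
  have hagree : μ {z | T.eval z ≠ c z}ᶜ ≤ ENNReal.ofReal (1 - ε) := by
    rw [prob_compl_eq_one_sub (s := {z | T.eval z ≠ c z})
      (measurableSet_eq_fun T.measurable_eval hc).compl,
      ENNReal.ofReal_sub _ hε, ENNReal.ofReal_one]
    exact tsub_le_tsub_left herr.le 1
  calc _ ≤ μ ((T.snap g).badSet g) + μ {z | T.eval z ≠ c z}ᶜ :=
        (measure_mono hsub).trans (measure_union_le _ _)
    _ ≤ ENNReal.ofReal (ε / 2) + ENNReal.ofReal (1 - ε) := add_le_add hbad hagree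
    _ = ENNReal.ofReal (1 - ε / 2) := by
        rw [← ENNReal.ofReal_add (by linarith) (by linarith)]
        ring_nf

end DTree

noncomputable def marginalGrid (μ : Measure (Fin d → ℝ)) (M : ℕ) (i : Fin d) : Fin M → ℝ :=
  quantileGrid (μ.map fun z => z i) M

variable (μ : Measure (Fin d → ℝ)) [IsProbabilityMeasure μ]

instance (i : Fin d) : IsProbabilityMeasure (μ.map fun z => z i) :=
  Measure.isProbabilityMeasure_map (measurable_pi_apply i).aemeasurable

lemma measure_lowSet_marginalGrid_le (hM : 0 < M) :
    μ (lowSet (marginalGrid μ M)) ≤ d * ENNReal.ofReal (1 / (M + 1)) := calc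
  μ (lowSet (marginalGrid μ M))
      ≤ ∑ i, μ ((fun z => z i) ⁻¹' belowGrid (marginalGrid μ M i)) :=
    measure_iUnion_fintype_le _ _
  _ ≤ ∑ _i : Fin d, ENNReal.ofReal (1 / (M + 1)) := Finset.sum_le_sum fun i _ =>
    (Measure.le_map_apply (measurable_pi_apply i).aemeasurable _).trans
      (measure_belowGrid_quantileGrid_le _ hM)
  _ = d * ENNReal.ofReal (1 / (M + 1)) := by simp

lemma measure_gapSet_marginalGrid_le (T : ITree d M) :
    μ (T.gapSet (marginalGrid μ M)) ≤ T.size * ENNReal.ofReal (1 / (M + 1)) := by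
  induction T with
  | leaf b => simp [ITree.gapSet]
  | node i j L R ihL ihR =>
    calc _ ≤ μ {z | z i ∈ gridGap (marginalGrid μ M i) j} + μ (L.gapSet (marginalGrid μ M)) +
          μ (R.gapSet (marginalGrid μ M)) :=
          (measure_union_le _ _).trans (add_le_add (measure_union_le _ _) le_rfl)
      _ ≤ ENNReal.ofReal (1 / (M + 1)) + L.size * ENNReal.ofReal (1 / (M + 1)) +
          R.size * ENNReal.ofReal (1 / (M + 1)) := by
          gcongr
          exact (Measure.le_map_apply (measurable_pi_apply i).aemeasurable _).trans
            (measure_gridGap_quantileGrid_le _ j)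
      _ = (ITree.node i j L R).size * ENNReal.ofReal (1 / (M + 1)) := by
          simp only [ITree.size]
          push_cast
          ring

lemma measure_badSet_marginalGrid_le (hM : 0 < M) (T : ITree d M) :
    μ (T.badSet (marginalGrid μ M)) ≤ ENNReal.ofReal ((d + T.size) / (M + 1)) := calc
  μ (T.badSet (marginalGrid μ M))
      ≤ d * ENNReal.ofReal (1 / (M + 1)) + T.size * ENNReal.ofReal (1 / (M + 1)) :=
    (measure_union_le _ _).trans (add_le_add (measure_lowSet_marginalGrid_le μ hM)
      (measure_gapSet_marginalGrid_le μ T))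
  _ = ENNReal.ofReal ((d + T.size) / (M + 1)) := by
    rw [← add_mul, ← Nat.cast_add, ← ENNReal.ofReal_natCast, ← ENNReal.ofReal_mul (by positivity)]
    push_cast
    ring_nf

lemma measure_badSet_snap_marginalGrid_le {ε : ℝ} (hε : 0 < ε) {K : ℕ} {T : DTree d}
    (hT : T.innerNodes ≤ K) (hM₀ : 0 < M) (hM : 2 * (d + K) / ε ≤ M) :
    μ ((T.snap (marginalGrid μ M)).badSet (marginalGrid μ M)) ≤ ENNReal.ofReal (ε / 2) := by
  refine (measure_badSet_marginalGrid_le μ hM₀ _).trans (ENNReal.ofReal_le_ofReal ?_)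
  have hsize : ((T.snap (marginalGrid μ M)).size : ℝ) ≤ K := by
    exact_mod_cast (T.size_snap_le _).trans hT
  rw [div_le_iff₀ hε] at hM
  rw [div_le_iff₀ (by positivity)]
  nlinarith

end Trees

lemma measure_pi_setOf_exists_forall_mem_le {α ι : Type*} [MeasurableSpace α] [Finite ι]
    (μ : Measure α) [SigmaFinite μ] (E : ι → Set α) (r : ℝ≥0∞) (n : ℕ) :
    Measure.pi (fun _ : Fin n => μ) {x | ∃ a, μ (E a) ≤ r ∧ ∀ i, x i ∈ E a} ≤
      Nat.card ι * r ^ n := by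
  have := Fintype.ofFinite ι
  have hcyl : ∀ a, Measure.pi (fun _ : Fin n => μ) {x | μ (E a) ≤ r ∧ ∀ i, x i ∈ E a} ≤ r ^ n := by
    intro a
    by_cases hr : μ (E a) ≤ r
    · have : {x : Fin n → α | μ (E a) ≤ r ∧ ∀ i, x i ∈ E a} = univ.pi fun _ => E a := by
        ext x
        simp [hr]
      rw [this, Measure.pi_pi, Finset.prod_const, Finset.card_univ, Fintype.card_fin]
      exact pow_le_pow_left₀ zero_le hr n
    · simp [hr]
  rw [ofPred_exists]
  calc _ ≤ ∑ a, Measure.pi (fun _ : Fin n => μ) {x | μ (E a) ≤ r ∧ ∀ i, x i ∈ E a} :=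
        measure_iUnion_fintype_le _ _
    _ ≤ ∑ _a : ι, r ^ n := Finset.sum_le_sum fun a _ => hcyl a
    _ = Nat.card ι * r ^ n := by simp [Nat.card_eq_fintype_card]

lemma mul_one_sub_pow_le {N η δ : ℝ} {n : ℕ} (hN : 0 < N) (hη : η ≤ 1) (hδ : 0 < δ)
    (h : Real.log N - Real.log δ ≤ η * n) : N * (1 - η) ^ n ≤ δ := calc
  N * (1 - η) ^ n ≤ Real.exp (Real.log N) * Real.exp (-η) ^ n := by
      rw [Real.exp_log hN]
      gcongr
      exact Real.one_sub_le_exp_neg η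
  _ = Real.exp (Real.log N - η * n) := by
      rw [← Real.exp_nat_mul, ← Real.exp_add]
      ring_nf
  _ ≤ Real.exp (Real.log δ) := Real.exp_le_exp.2 (by linarith)
  _ = δ := Real.exp_log hδ

lemma log_eight_mul_sq_mul_div_le {d K : ℕ} {ε : ℝ} (hd : 1 ≤ d) (hK : 1 ≤ K) (hε : 0 < ε) :
    Real.log (8 * d ^ 2 * K / ε) ≤ 3 + 2 * d + Real.log K + Real.log (1 / ε) := by
  have hlog8 : Real.log 8 ≤ 3 := by
    rw [show (8 : ℝ) = 2 ^ 3 by norm_num, Real.log_pow]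
    push_cast
    linarith [Real.log_two_lt_d9]
  have hlogd : Real.log d ≤ d := (Real.log_le_sub_one_of_pos (by positivity)).trans (by linarith)
  rw [div_eq_mul_one_div, Real.log_mul (by positivity) (by positivity),
    Real.log_mul (by positivity) (by positivity), Real.log_mul (by norm_num) (by positivity),
    Real.log_pow]
  push_cast
  linarith

lemma mul_log_sub_log_le {d K : ℕ} {ε δ : ℝ} (hd : 1 ≤ d) (hK : 2 ≤ K) (hε : 0 < ε)
    (hε₁ : ε ≤ 1 / 2) (hδ : 0 < δ) (hδ₁ : δ ≤ 1 / 2) :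
    (2 * K + 1) * Real.log (8 * d ^ 2 * K / ε) - Real.log δ ≤
      50 * K * d * Real.log K * Real.log (1 / (ε * δ)) := by
  have hK' : (2 : ℝ) ≤ K := by exact_mod_cast hK
  have hu : (1 : ℝ) ≤ d := by exact_mod_cast hd
  set u : ℝ := (d : ℝ)
  set v := 2 * Real.log K
  set w := Real.log (1 / (ε * δ))
  have hv : 1 ≤ v := by linarith [Real.log_le_log (by norm_num) hK', Real.log_two_gt_d9]
  have hεδ : ε * δ ≤ 1 / 4 := by nlinarith
  have hw : 1 ≤ w := by
    rw [Real.le_log_iff_exp_le (by positivity), le_div_iff₀ (by positivity)]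
    nlinarith [mul_le_mul Real.exp_one_lt_d9.le hεδ (by positivity) (by norm_num)]
  -- all three factors are at least `1`, so each of them is at most their product
  have hu_le : u ≤ u * v * w := by
    rw [mul_assoc]
    exact le_mul_of_one_le_right (by positivity) (one_le_mul_of_one_le_of_one_le hv hw)
  have hv_le : v ≤ u * v * w := by
    rw [mul_comm u, mul_assoc]
    exact le_mul_of_one_le_right (by positivity) (one_le_mul_of_one_le_of_one_le hu hw)
  have hw_le : w ≤ u * v * w :=
    le_mul_of_one_le_left (by positivity) (one_le_mul_of_one_le_of_one_le hu hv)
  have hlog : Real.log (8 * d ^ 2 * K / ε) ≤ 7 * (u * v * w) := by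
    have hlogε : Real.log (1 / ε) ≤ w :=
      Real.log_le_log (by positivity) (one_div_le_one_div_of_le (by positivity) (by nlinarith))
    linarith [log_eight_mul_sq_mul_div_le hd (by omega : 1 ≤ K) hε]
  have hlogδ : -Real.log δ ≤ w := by
    rw [← Real.log_inv, ← one_div]
    exact Real.log_le_log (by positivity) (one_div_le_one_div_of_le (by positivity) (by nlinarith))
  have hP : 0 ≤ u * v * w := by positivity
  have hmain : (2 * K + 1) * Real.log (8 * d ^ 2 * K / ε) ≤ 3 * K * (7 * (u * v * w)) := calc
    _ ≤ (2 * K + 1) * (7 * (u * v * w)) := by gcongr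
    _ ≤ 3 * K * (7 * (u * v * w)) := by gcongr; linarith
  have hKP : u * v * w ≤ K * (u * v * w) := le_mul_of_one_le_left hP (by linarith)
  calc (2 * K + 1) * Real.log (8 * d ^ 2 * K / ε) - Real.log δ
      ≤ 22 * K * (u * v * w) := by linarith
    _ ≤ 25 * K * (u * v * w) := by gcongr; norm_num
    _ = 50 * K * d * Real.log K * Real.log (1 / (ε * δ)) := by ring

lemma natCast_mul_ceil_add_three_le {d K : ℕ} {ε : ℝ} (hd : 1 ≤ d) (hK : 2 ≤ K) (hε : 0 < ε)
    (hε₁ : ε ≤ 1 / 2) : ((d * ⌈2 * (d + K) / ε⌉₊ + 3 : ℕ) : ℝ) ≤ 8 * d ^ 2 * K / ε := by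
  have hd' : (1 : ℝ) ≤ d := by exact_mod_cast hd
  have hK' : (2 : ℝ) ≤ K := by exact_mod_cast hK
  have hM : (⌈2 * (d + K) / ε⌉₊ : ℝ) * ε ≤ 2 * (d + K) + ε := by
    have hceil := Nat.ceil_lt_add_one (by positivity : 0 ≤ 2 * (d + K) / ε)
    have := (lt_div_iff₀ hε).1 (by linarith : (⌈2 * (d + K) / ε⌉₊ : ℝ) - 1 < 2 * (d + K) / ε)
    linarith
  have hdM := mul_le_mul_of_nonneg_left hM (by positivity : (0 : ℝ) ≤ d)
  have hd2 : (d : ℝ) ≤ d ^ 2 := by nlinarith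
  have hd2K : (d : ℝ) ^ 2 * 2 ≤ d ^ 2 * K := by nlinarith
  have hdK : (d : ℝ) * K ≤ d ^ 2 * K := by nlinarith
  rw [le_div_iff₀ hε]
  push_cast
  nlinarith

lemma natCast_pow_mul_one_sub_pow_le {d K n : ℕ} {ε δ : ℝ} (hd : 1 ≤ d) (hK : 2 ≤ K)
    (hε : 0 < ε) (hε₁ : ε ≤ 1 / 2) (hδ : 0 < δ) (hδ₁ : δ ≤ 1 / 2)
    (hn : 100 * (1 / ε) * K * d * Real.log K * Real.log (1 / (ε * δ)) ≤ n) :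
    (((d * ⌈2 * (d + K) / ε⌉₊ + 3) ^ (2 * K + 1) : ℕ) : ℝ) * (1 - ε / 2) ^ n ≤ δ := by
  refine mul_one_sub_pow_le (by positivity) (by linarith) hδ ?_
  calc Real.log (((d * ⌈2 * (d + K) / ε⌉₊ + 3) ^ (2 * K + 1) : ℕ) : ℝ) - Real.log δ
      = (2 * K + 1) * Real.log ((d * ⌈2 * (d + K) / ε⌉₊ + 3 : ℕ) : ℝ) - Real.log δ := by
        rw [Nat.cast_pow, Real.log_pow]
        push_cast
        ring
    _ ≤ (2 * K + 1) * Real.log (8 * d ^ 2 * K / ε) - Real.log δ := by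
        gcongr
        exact natCast_mul_ceil_add_three_le hd hK hε hε₁
    _ ≤ 50 * K * d * Real.log K * Real.log (1 / (ε * δ)) :=
        mul_log_sub_log_le hd hK hε hε₁ hδ hδ₁
    _ = ε / 2 * (100 * (1 / ε) * K * d * Real.log K * Real.log (1 / (ε * δ))) := by
        field_simp
        ring
    _ ≤ ε / 2 * n := by gcongr

/-- probabilistic completeness of DTInv: there is a constant `C > 0`
such that for every dimension `d ≥ 1`, node bound `K ≥ 2`, accuracy `ε ≤ 1/2` and
confidence `δ ≤ 1/2`, any decision tree with at most `K` inner nodes that is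
consistent with an i.i.d. sample of size `n ≥ C·(1/ε)·K·d·log K·log(1/(εδ))`
has true error at most `ε`, with probability at least `1 - δ`. -/
theorem dtinv_probabilistic_completeness :
    ∃ C : ℝ, 0 < C ∧
      ∀ (d K : ℕ), 1 ≤ d → 2 ≤ K →
      ∀ ε δ : ℝ, 0 < ε → ε ≤ 1 / 2 → 0 < δ → δ ≤ 1 / 2 →
      ∀ μ : Measure (Fin d → ℝ), IsProbabilityMeasure μ →
      ∀ c : (Fin d → ℝ) → Bool, Measurable c →
      ∀ n : ℕ,
        C * (1 / ε) * K * d * Real.log K * Real.log (1 / (ε * δ)) ≤ (n : ℝ) →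
        (Measure.pi fun _ : Fin n => μ)
          {x : Fin n → (Fin d → ℝ) | ∃ T : DTree d, T.innerNodes ≤ K ∧
            (∀ i : Fin n, T.eval (x i) = c (x i)) ∧
            ENNReal.ofReal ε < μ {z | T.eval z ≠ c z}}
          ≤ ENNReal.ofReal δ := by
  refine ⟨100, by norm_num, fun d K hd hK ε δ hε hε₁ hδ hδ₁ μ hμ c hc n hn => ?_⟩
  set M := ⌈2 * (d + K) / ε⌉₊
  set g := marginalGrid μ M
  have hM₀ : 0 < M := Nat.ceil_pos.2 (by positivity)
  have hM : 2 * (d + K) / ε ≤ M := Nat.le_ceil _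
  calc _ ≤ Measure.pi (fun _ : Fin n => μ) {x | ∃ T' : {T' : ITree d M // T'.size ≤ K},
          μ (T'.1.compatibleSet g c) ≤ ENNReal.ofReal (1 - ε / 2) ∧
            ∀ i, x i ∈ T'.1.compatibleSet g c} := by
        refine measure_mono fun x hx => ?_
        obtain ⟨T, hTK, hcons, herr⟩ := hx
        exact ⟨⟨T.snap g, (T.size_snap_le g).trans hTK⟩,
          DTree.measure_compatibleSet_snap_le μ hc hε.le (by linarith)
            (measure_badSet_snap_marginalGrid_le μ hε hTK hM₀ hM) herr,
          fun i => DTree.mem_compatibleSet_snap (hcons i)⟩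
    _ ≤ Nat.card {T' : ITree d M // T'.size ≤ K} * ENNReal.ofReal (1 - ε / 2) ^ n :=
        measure_pi_setOf_exists_forall_mem_le μ _ _ n
    _ ≤ (((d * M + 3) ^ (2 * K + 1) : ℕ) : ℝ≥0∞) * ENNReal.ofReal (1 - ε / 2) ^ n := by
        gcongr
        exact_mod_cast ITree.natCard_size_le_le K
    _ ≤ ENNReal.ofReal δ := by
        rw [← ENNReal.ofReal_natCast, ← ENNReal.ofReal_pow (by linarith),
          ← ENNReal.ofReal_mul (by positivity)]
        exact ENNReal.ofReal_le_ofReal (natCast_pow_mul_one_sub_pow_le hd hK hε hε₁ hδ hδ₁ hn)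
end

section
/- The VC dimension of decision trees with a bounded number of nodes is O(K·d·log K): there exists a constant C > 0 such that for all d ≥ 1 and K ≥ 2, every finite set s of points in ℝ^d that is shattered by the class of functions {z ↦ eval(T, z) | T a decision tree over ℝ^d with at most K inner nodes} has cardinality at most C·K·d·log K. -/
/-!
On a finite set `s`, the test `z i ≤ t` of an inner node is determined by `i` and the number
of points of `s` it sends left, since for fixed `i` these left sides are nested. A tree with at
most `K` inner nodes therefore behaves on `s` as prescribed by its preorder serialization over
an alphabet of `3 + d (|s| + 1)` letters, a word of length at most `2K + 1`. Shattering `s`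
forces `2 ^ |s| ≤ (3 + d (|s| + 1)) ^ (2K + 1)`, and solving for `|s|` gives the bound.
-/

open Finset Real

theorem Finset.filter_le_eq_of_card_eq {α β : Type*} [LinearOrder β] (s : Finset α) (f : α → β)
    {t t' : β} (h : #(s.filter (f · ≤ t)) = #(s.filter (f · ≤ t'))) :
    s.filter (f · ≤ t) = s.filter (f · ≤ t') := by
  wlog htt : t ≤ t' generalizing t t'
  · exact (this h.symm (le_of_not_ge htt)).symm
  exact eq_of_subset_of_card_le (monotone_filter_right s fun _ _ h => h.trans htt) h.ge

theorem List.eq_of_length_le_of_getElem?_eq {α : Type*} {n : ℕ} {l₁ l₂ : List α}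
    (h₁ : l₁.length ≤ n) (h₂ : l₂.length ≤ n) (h : ∀ j : Fin n, l₁[(j : ℕ)]? = l₂[(j : ℕ)]?) :
    l₁ = l₂ :=
  List.ext_getElem? fun j =>
    if hj : j < n then h ⟨j, hj⟩
    else by rw [getElem?_eq_none (by omega), getElem?_eq_none (by omega)]

theorem two_pow_card_le_of_shatters {X ι β : Type*} [Fintype β] {s : Finset X}
    {f : ι → X → Bool} (c : ι → β) (hc : ∀ i j, c i = c j → ∀ p ∈ s, f i p = f j p)
    (hs : ∀ y : X → Bool, ∃ i, ∀ p ∈ s, f i p = y p) :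
    2 ^ #s ≤ Fintype.card β := by
  classical
  choose g hg using fun u : Finset X => hs (· ∈ u)
  have hinj : (s.powerset : Set (Finset X)).InjOn (c ∘ g) := by
    intro u hu v hv huv
    have hmem : ∀ p ∈ s, (p ∈ u ↔ p ∈ v) := fun p hp => by
      simpa [hg u p hp, hg v p hp] using hc _ _ huv p hp
    ext p
    exact ⟨fun h => (hmem p (mem_powerset.1 hu h)).1 h, fun h => (hmem p (mem_powerset.1 hv h)).2 h⟩
  calc 2 ^ #s = #s.powerset := (card_powerset s).symm
    _ ≤ #(univ : Finset β) := card_le_card_of_injOn _ (fun _ _ => mem_coe.2 (mem_univ _)) hinj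
    _ = Fintype.card β := card_univ

namespace DTree

variable {d : ℕ}

noncomputable def cutRank (s : Finset (Fin d → ℝ)) (i : Fin d) (t : ℝ) : Fin (#s + 1) :=
  ⟨#(s.filter (· i ≤ t)), Nat.lt_succ_of_le (card_filter_le _ _)⟩

theorem le_iff_le_of_cutRank_eq {s : Finset (Fin d → ℝ)} {i : Fin d} {t t' : ℝ}
    (h : cutRank s i t = cutRank s i t') {p : Fin d → ℝ} (hp : p ∈ s) : p i ≤ t ↔ p i ≤ t' := by
  have := Finset.filter_le_eq_of_card_eq s (· i) (congrArg Fin.val h)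
  simpa [hp] using Finset.ext_iff.1 this p

noncomputable def code (s : Finset (Fin d → ℝ)) : DTree d → List (Bool ⊕ Fin d × Fin (#s + 1))
  | leaf b => [.inl b]
  | node i t L R => .inr (i, cutRank s i t) :: (code s L ++ code s R)

variable {s : Finset (Fin d → ℝ)}

theorem length_code (T : DTree d) : (code s T).length = 2 * T.innerNodes + 1 := by
  induction T with
  | leaf b => rfl
  | node i t L R ihL ihR =>
    simp only [code, innerNodes, List.length_cons, List.length_append, ihL, ihR]
    ring

theorem eval_eq_of_code_append_eq {T₁ T₂ : DTree d} {l₁ l₂ : List (Bool ⊕ Fin d × Fin (#s + 1))}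
    (h : code s T₁ ++ l₁ = code s T₂ ++ l₂) : (∀ p ∈ s, T₁.eval p = T₂.eval p) ∧ l₁ = l₂ := by
  induction T₁ generalizing T₂ l₁ l₂ with
  | leaf b =>
    cases T₂ with
    | leaf b' =>
      obtain ⟨rfl, rfl⟩ : b = b' ∧ l₁ = l₂ := by simpa [code] using h
      exact ⟨fun _ _ => rfl, rfl⟩
    | node => simp [code] at h
  | node i t L R ihL ihR =>
    cases T₂ with
    | leaf => simp [code] at h
    | node i' t' L' R' =>
      simp only [code, List.cons_append, List.cons.injEq, Sum.inr.injEq, Prod.mk.injEq,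
        List.append_assoc] at h
      obtain ⟨⟨rfl, hcut⟩, hrest⟩ := h
      obtain ⟨hL, hrest⟩ := ihL hrest
      obtain ⟨hR, rfl⟩ := ihR hrest
      refine ⟨fun p hp => ?_, rfl⟩
      simp only [eval, le_iff_le_of_cutRank_eq hcut hp, hL p hp, hR p hp]

noncomputable def paddedCode (s : Finset (Fin d → ℝ)) (n : ℕ) (T : DTree d) :
    Fin n → Option (Bool ⊕ Fin d × Fin (#s + 1)) :=
  fun j => (code s T)[(j : ℕ)]?

theorem eval_eq_of_paddedCode_eq {K : ℕ} {T₁ T₂ : DTree d} (h₁ : T₁.innerNodes ≤ K)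
    (h₂ : T₂.innerNodes ≤ K) (h : paddedCode s (2 * K + 1) T₁ = paddedCode s (2 * K + 1) T₂) :
    ∀ p ∈ s, T₁.eval p = T₂.eval p := by
  have hcode : code s T₁ = code s T₂ :=
    List.eq_of_length_le_of_getElem?_eq (by rw [length_code]; omega) (by rw [length_code]; omega)
      (congrFun h)
  exact (eval_eq_of_code_append_eq (l₁ := []) (l₂ := []) (by rw [hcode])).1

theorem two_pow_card_le_of_shatters {K : ℕ}
    (hsh : ∀ y : (Fin d → ℝ) → Bool, ∃ T : DTree d, T.innerNodes ≤ K ∧ ∀ p ∈ s, T.eval p = y p) :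
    2 ^ #s ≤ (3 + d * (#s + 1)) ^ (2 * K + 1) := by
  have := _root_.two_pow_card_le_of_shatters
    (f := fun T : {T : DTree d // T.innerNodes ≤ K} => T.1.eval)
    (fun T => paddedCode s (2 * K + 1) T.1)
    (fun T T' h => eval_eq_of_paddedCode_eq T.2 T'.2 h)
    (fun y => let ⟨T, hT, hy⟩ := hsh y; ⟨⟨T, hT⟩, hy⟩)
  convert this using 2
  simp only [Fintype.card_fun, Fintype.card_option, Fintype.card_sum, Fintype.card_prod,
    Fintype.card_bool, Fintype.card_fin]
  ring

end DTree

theorem le_mul_log_of_mul_log_two_le {n d K : ℝ} (hn : 1 ≤ n) (hd : 1 ≤ d) (hK : 2 ≤ K)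
    (h : n * log 2 ≤ (2 * K + 1) * log (3 + d * (n + 1))) : n ≤ 100 * K * d * log K := by
  have hlog2 := log_two_gt_d9
  have hlogK : log 2 ≤ log K := log_le_log two_pos hK
  have h45 : log 45 ≤ 6 * log K :=
    calc log 45 ≤ log (K ^ 6) :=
          log_le_log (by norm_num) (by nlinarith [pow_le_pow_left₀ zero_le_two hK 6])
      _ = 6 * log K := by rw [log_pow]; norm_num
  -- `log n ≤ log (9K) + n / (9K)`; after multiplying by `3K` the last term is `n / 3 < n log 2`
  have hA : log (3 + d * (n + 1)) ≤ 7 * log K + d + n / (9 * K) := by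
    calc log (3 + d * (n + 1)) ≤ log (45 * K * d * (n / (9 * K))) := by
          refine log_le_log (by positivity) ?_
          rw [show 45 * K * d * (n / (9 * K)) = 5 * d * n by field_simp; ring]
          nlinarith
      _ = log 45 + log K + log d + log (n / (9 * K)) := by
          rw [log_mul (by positivity) (by positivity), log_mul (by positivity) (by positivity),
            log_mul (by positivity) (by positivity)]
      _ ≤ 6 * log K + log K + d + n / (9 * K) := by
          gcongr
          · exact log_le_self (by positivity)
          · linarith [log_le_sub_one_of_pos (x := n / (9 * K)) (by positivity)]
      _ = 7 * log K + d + n / (9 * K) := by ring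
  have hmain : n * log 2 ≤ 21 * (K * log K) + 3 * (K * d) + n / 3 := by
    calc n * log 2 ≤ (2 * K + 1) * log (3 + d * (n + 1)) := h
      _ ≤ 3 * K * (7 * log K + d + n / (9 * K)) :=
          mul_le_mul (by linarith) hA (log_nonneg (by nlinarith)) (by positivity)
      _ = 21 * (K * log K) + 3 * (K * d) + n / 3 := by field_simp; ring
  have hKlogK : K * log K ≤ K * d * log K := by
    nlinarith [mul_nonneg (by linarith : (0 : ℝ) ≤ K) (by linarith : (0 : ℝ) ≤ log K)]
  have hKd : 0.6931471803 * (K * d) ≤ K * d * log K := by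
    nlinarith [mul_nonneg (by linarith : (0 : ℝ) ≤ K) (by linarith : (0 : ℝ) ≤ d)]
  nlinarith

/-- the VC dimension of decision trees with at most `K` inner nodes over
`ℝ^d` is `O(K·d·log K)`: every finite set shattered by this class has cardinality at
most `C·K·d·log K` for a universal constant `C > 0`. -/
theorem vc_dimension_bounded_decision_trees :
    ∃ C : ℝ, 0 < C ∧
      ∀ (d K : ℕ), 1 ≤ d → 2 ≤ K →
      ∀ s : Finset (Fin d → ℝ),
        (∀ y : (Fin d → ℝ) → Bool,
          ∃ T : DTree d, T.innerNodes ≤ K ∧ ∀ p ∈ s, T.eval p = y p) →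
        (s.card : ℝ) ≤ C * K * d * Real.log K := by
  refine ⟨100, by norm_num, fun d K hd hK s hsh => ?_⟩
  have hK' : (2 : ℝ) ≤ K := by exact_mod_cast hK
  rcases s.eq_empty_or_nonempty with rfl | hs
  · have := log_nonneg (by linarith : (1 : ℝ) ≤ K)
    simp only [card_empty, Nat.cast_zero]
    positivity
  have hcount : (2 : ℝ) ^ #s ≤ (3 + d * (#s + 1)) ^ (2 * K + 1) := by
    exact_mod_cast DTree.two_pow_card_le_of_shatters hsh
  have hlog := log_le_log (by positivity) hcount
  rw [log_pow, log_pow] at hlog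
  push_cast at hlog
  exact le_mul_log_of_mul_log_two_le (by exact_mod_cast hs.card_pos) (by exact_mod_cast hd) hK' hlog
end
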